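/- (Lemma, expected interference bound.) Fix x ≥ 0 at which F is differentiable, and suppose F satisfies Assumption 2 with constant β > 0. Let ρ be the spectral radius of AᵀA. Perform one Shotgun iteration with P parallel updates at x, producing the random collective update Δx. Then E_{P_t}[ F(x + Δx) − F(x) ] ≤ P · E_j[ δx_j (∇F(x))_j + (β/2)(δx_j)² ] + (β/2) P (P−1) (ρ/m) · E_j[ (δx_j)² ], where E_{P_t} is over the random choice of the P indices, E_j is over a single index j chosen uniformly from {1,…,m}, and δx_j = max{ −x_j , −(∇F(x))_j / β }. -/

import Mathlib

/-!
Assumption 2 bounds `F (x + Δx) - F x` by `Δxᵀ ∇F(x) + (β/2) Δxᵀ AᵀA Δx`, and for the sparse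
update `Δx = ∑ₖ δ_{σₖ} e_{σₖ}` both terms expand over the `P` slots. Averaging over the independent
uniform indices, the linear term and the `P` diagonal terms `δ_{σₖ}² (AᵀA)_{σₖσₖ} = δ_{σₖ}²` give
`P · E_j[…]`, while each of the `P (P - 1)` pairs of distinct slots `k ≠ l` carries independent
indices and averages to `δᵀ AᵀA δ / m² ≤ ρ ‖δ‖² / m²`, by the Rayleigh bound for the symmetric
matrix `AᵀA`.
-/

open Matrix Finset

/-- `(∇F(x))_j`, the `j`-th coordinate of the gradient of `F` at `x`. -/
noncomputable def grad {m : ℕ} (F : (Fin m → ℝ) → ℝ) (x : Fin m → ℝ) (j : Fin m) : ℝ :=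
  fderiv ℝ F x (Pi.single j 1)

/-- Assumption 2 with constant `β > 0`: for every feasible `x` and `Δx`,
`F(x + Δx) ≤ F(x) + Δxᵀ ∇F(x) + (β/2) Δxᵀ AᵀA Δx`. -/
def Assumption2 {n m : ℕ} (A : Matrix (Fin n) (Fin m) ℝ) (β : ℝ)
    (F : (Fin m → ℝ) → ℝ) : Prop :=
  ∀ x Δx : Fin m → ℝ, 0 ≤ x → 0 ≤ x + Δx →
    F (x + Δx) ≤ F x + (∑ j, Δx j * grad F x j) + β / 2 * (Δx ⬝ᵥ (Aᵀ * A).mulVec Δx)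

/-- The spectral radius of a real square matrix: the supremum of the absolute values of its
eigenvalues. -/
noncomputable def specRad {ι : Type} [Fintype ι] [DecidableEq ι]
    (M : Matrix ι ι ℝ) : ℝ :=
  sSup {r : ℝ | ∃ μ : ℝ, Module.End.HasEigenvalue (Matrix.toLin' M) μ ∧ r = |μ|}

open scoped BigOperators

theorem LinearMap.IsSymmetric.exists_hasEigenvalue_inner_le {E : Type*} [NormedAddCommGroup E]
    [InnerProductSpace ℝ E] [FiniteDimensional ℝ E] [Nontrivial E] {T : E →ₗ[ℝ] E}
    (hT : T.IsSymmetric) :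
    ∃ μ, Module.End.HasEigenvalue T μ ∧ ∀ v, inner ℝ (T v) v ≤ μ * ‖v‖ ^ 2 := by
  refine ⟨_, hT.hasEigenvalue_iSup_of_finiteDimensional, fun v => ?_⟩
  rcases eq_or_ne v 0 with rfl | hv
  · simp
  have hbdd : BddAbove (Set.range fun x : {x : E // x ≠ 0} =>
      RCLike.re (inner ℝ (T x) (x : E)) / ‖(x : E)‖ ^ 2) :=
    ⟨‖LinearMap.toContinuousLinearMap T‖, Set.forall_mem_range.2 fun x =>
      (le_abs_self _).trans ((LinearMap.toContinuousLinearMap T).rayleighQuotient_le_norm x)⟩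
  rw [← div_le_iff₀ (by positivity)]
  exact le_ciSup hbdd ⟨v, hv⟩

section SpectralRadius

variable {ι : Type} [Fintype ι] [DecidableEq ι] {M : Matrix ι ι ℝ}

theorem abs_le_specRad {μ : ℝ} (hμ : Module.End.HasEigenvalue (toLin' M) μ) :
    |μ| ≤ specRad M := by
  refine le_csSup (Set.Finite.bddAbove ?_) ⟨μ, hμ, rfl⟩
  refine ((Module.End.finite_hasEigenvalue (toLin' M)).image abs).subset ?_
  rintro _ ⟨μ', hμ', rfl⟩
  exact ⟨μ', hμ', rfl⟩

theorem Matrix.IsSymm.dotProduct_mulVec_le_specRad (hM : M.IsSymm) (v : ι → ℝ) :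
    v ⬝ᵥ M *ᵥ v ≤ specRad M * (v ⬝ᵥ v) := by
  rcases eq_or_ne v 0 with rfl | hv
  · simp
  set w := WithLp.toLp 2 v
  have : Nontrivial (EuclideanSpace ℝ ι) := ⟨w, 0, by simpa [w] using hv⟩
  have hT : (toEuclideanLin M).IsSymmetric :=
    isSymmetric_toEuclideanLin_iff.mpr (isHermitian_iff_isSymm.mpr hM)
  obtain ⟨μ, hμ, hle⟩ := hT.exists_hasEigenvalue_inner_le
  have hμ' : Module.End.HasEigenvalue (toLin' M) μ := by
    rwa [Module.End.hasEigenvalue_iff_mem_spectrum, spectrum_toLin', ← spectrum_toLpLin 2,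
      ← Module.End.hasEigenvalue_iff_mem_spectrum]
  have hinner : inner ℝ (toEuclideanLin M w) w = v ⬝ᵥ M *ᵥ v := by
    simp [w, EuclideanSpace.inner_toLp_toLp]
  have hnorm : ‖w‖ ^ 2 = v ⬝ᵥ v := by
    rw [← real_inner_self_eq_norm_sq, EuclideanSpace.inner_toLp_toLp]
    simp
  calc v ⬝ᵥ M *ᵥ v ≤ μ * (v ⬝ᵥ v) := hinner ▸ hnorm ▸ hle w
    _ ≤ specRad M * (v ⬝ᵥ v) := by
      gcongr
      · exact dotProduct_self_star_nonneg v
      · exact (le_abs_self μ).trans (abs_le_specRad hμ')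

end SpectralRadius

section SparseVectors

variable {ι κ R : Type*} [Fintype ι] [Fintype κ] [DecidableEq κ]

theorem Matrix.sum_single_dotProduct [NonUnitalNonAssocSemiring R] (u : ι → κ) (c : ι → R)
    (g : κ → R) : (∑ k, Pi.single (u k) (c k)) ⬝ᵥ g = ∑ k, c k * g (u k) := by
  simp only [sum_dotProduct, single_dotProduct]

theorem Matrix.sum_single_dotProduct_mulVec_sum_single [CommSemiring R] (M : Matrix κ κ R)
    (u : ι → κ) (c : ι → R) :
    (∑ k, Pi.single (u k) (c k)) ⬝ᵥ M *ᵥ ∑ l, Pi.single (u l) (c l) =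
      ∑ k, ∑ l, c k * M (u k) (u l) * c l := by
  simp only [mulVec_sum, mulVec_single, sum_dotProduct, dotProduct_sum, single_dotProduct,
    Pi.smul_apply, col_apply, op_smul_eq_mul, mul_assoc]
  exact Finset.sum_comm

end SparseVectors

section UniformIndices

variable {ι κ : Type*} [Fintype ι] [DecidableEq ι] [Fintype κ]

theorem Fintype.expect_apply_eval {M : Type*} [AddCommMonoid M] [Module ℚ≥0 M] (k : ι)
    (f : κ → M) : 𝔼 σ : ι → κ, f (σ k) = 𝔼 a, f a := by
  rw [Fintype.expect_equiv (Equiv.funSplitAt k κ) (fun σ => f (σ k)) (fun p => f p.1)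
    fun _ => rfl, ← univ_product_univ, Finset.expect_product]
  cases isEmpty_or_nonempty κ
  · simp
  · simp only [Fintype.expect_const]

theorem Fintype.expect_apply_eval_apply_eval {M : Type*} [AddCommMonoid M] [Module ℚ≥0 M]
    {k l : ι} (hlk : l ≠ k) (f : κ → κ → M) :
    𝔼 σ : ι → κ, f (σ k) (σ l) = 𝔼 a, 𝔼 b, f a b := by
  rw [Fintype.expect_equiv (Equiv.funSplitAt k κ) (fun σ => f (σ k) (σ l))
    (fun p => f p.1 (p.2 ⟨l, hlk⟩)) fun _ => rfl, ← univ_product_univ, Finset.expect_product]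
  simp only [Fintype.expect_apply_eval]

variable {K : Type*} [Field K] [CharZero K]

theorem Fintype.expect_sum_apply_eval (f : κ → K) :
    𝔼 σ : ι → κ, ∑ k, f (σ k) = Fintype.card ι * 𝔼 a, f a := by
  simp [expect_sum_comm, Fintype.expect_apply_eval]

theorem Fintype.expect_sum_sum_apply_eval (f : κ → κ → K) :
    𝔼 σ : ι → κ, ∑ k, ∑ l, f (σ k) (σ l) =
      Fintype.card ι * 𝔼 a, f a a +
        Fintype.card ι * (Fintype.card ι - 1) * 𝔼 a, 𝔼 b, f a b := by
  have hrow (k : ι) : 𝔼 σ : ι → κ, ∑ l, f (σ k) (σ l) =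
      𝔼 a, f a a + (Fintype.card ι - 1) * 𝔼 a, 𝔼 b, f a b := by
    rw [expect_sum_comm, ← add_sum_erase _ _ (mem_univ k),
      Fintype.expect_apply_eval k (fun a => f a a),
      Finset.sum_congr rfl fun l (hl : l ∈ univ.erase k) =>
        Fintype.expect_apply_eval_apply_eval (ne_of_mem_erase hl) f,
      sum_const, card_erase_of_mem (mem_univ k), nsmul_eq_mul, card_univ,
      Nat.cast_pred (Fintype.card_pos_iff.2 ⟨k⟩)]
  simp only [expect_sum_comm, hrow, sum_const, card_univ, nsmul_eq_mul]
  ring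

theorem Matrix.expect_expect_mul_mul (M : Matrix κ κ K) (v : κ → K) :
    𝔼 a, 𝔼 b, v a * M a b * v b = v ⬝ᵥ M *ᵥ v / Fintype.card κ ^ 2 := by
  simp only [Fintype.expect_eq_sum_div_card, dotProduct, mulVec, ← sum_div, mul_sum, mul_assoc,
    div_div, sq]

end UniformIndices

theorem shotgun_expected_interference_bound_general {n m P : ℕ}
    (A : Matrix (Fin n) (Fin m) ℝ) (hA : ∀ j : Fin m, ∑ i, (A i j) ^ 2 = 1)
    (β : ℝ) (hβ : 0 < β) (F : (Fin m → ℝ) → ℝ)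
    (hF : Assumption2 A β F)
    (x : Fin m → ℝ) (hx : 0 ≤ x)
    (ρ : ℝ) (hρ : ρ = specRad (Aᵀ * A))
    (δ : Fin m → ℝ)
    (Δ : (Fin P → Fin m) → (Fin m → ℝ))
    (hΔ : ∀ σ : Fin P → Fin m, Δ σ = ∑ j : Fin P, Pi.single (σ j) (δ (σ j)))
    (hfeas : ∀ σ : Fin P → Fin m, 0 ≤ x + Δ σ) :
    (1 / (m : ℝ) ^ P) * ∑ σ : Fin P → Fin m, (F (x + Δ σ) - F x) ≤
      (P : ℝ) * ((1 / (m : ℝ)) * ∑ j, (δ j * grad F x j + β / 2 * (δ j) ^ 2)) +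
        β / 2 * (P : ℝ) * ((P : ℝ) - 1) * (ρ / m) *
          ((1 / (m : ℝ)) * ∑ j, (δ j) ^ 2) := by
  set M := Aᵀ * A
  set g := grad F x
  have hdiag (j : Fin m) : M j j = 1 := by simpa [M, mul_apply, sq] using hA j
  have hstep (σ : Fin P → Fin m) :
      F (x + Δ σ) - F x ≤ Δ σ ⬝ᵥ g + β / 2 * (Δ σ ⬝ᵥ M *ᵥ Δ σ) :=
    sub_le_iff_le_add'.2 ((hF x (Δ σ) hx (hfeas σ)).trans_eq (add_assoc _ _ _))
  have hquad : 𝔼 a, 𝔼 b, δ a * M a b * δ b ≤ ρ * (δ ⬝ᵥ δ) / m ^ 2 := by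
    rw [Matrix.expect_expect_mul_mul, Fintype.card_fin, hρ]
    have hM : M.IsSymm := transpose_mul _ _
    exact div_le_div_of_nonneg_right (hM.dotProduct_mulVec_le_specRad δ) (by positivity)
  have hP : 0 ≤ (P : ℝ) * (P - 1) := by
    rcases P with _ | P <;> simp
    positivity
  calc (1 / (m : ℝ) ^ P) * ∑ σ : Fin P → Fin m, (F (x + Δ σ) - F x)
      = 𝔼 σ, (F (x + Δ σ) - F x) := by
        rw [Fintype.expect_eq_sum_div_card]; simp [div_eq_inv_mul]
    _ ≤ 𝔼 σ, (Δ σ ⬝ᵥ g + β / 2 * (Δ σ ⬝ᵥ M *ᵥ Δ σ)) := expect_le_expect fun σ _ => hstep σ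
    _ = P * 𝔼 j, δ j * g j +
          β / 2 * (P * 𝔼 j, δ j ^ 2 + P * (P - 1) * 𝔼 a, 𝔼 b, δ a * M a b * δ b) := by
        simp only [hΔ, sum_single_dotProduct_mulVec_sum_single]
        simp only [sum_single_dotProduct, expect_add_distrib, ← mul_expect,
          Fintype.expect_sum_apply_eval (f := fun a => δ a * g a),
          Fintype.expect_sum_sum_apply_eval (f := fun a b => δ a * M a b * δ b), hdiag, mul_one,
          ← sq, Fintype.card_fin]
    _ ≤ P * 𝔼 j, δ j * g j +
          β / 2 * (P * 𝔼 j, δ j ^ 2 + P * (P - 1) * (ρ * (δ ⬝ᵥ δ) / m ^ 2)) := by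
        gcongr
    _ = _ := by
        simp only [Fintype.expect_eq_sum_div_card, Fintype.card_fin, dotProduct, sum_add_distrib,
          ← mul_sum, ← sq]
        ring

/-- Lemma (expected interference bound): one Shotgun iteration with `P` parallel updates,
the `P` indices drawn independently and uniformly from `{1,…,m}`, satisfies
`E_{P_t}[F(x+Δx) - F(x)] ≤ P·E_j[δx_j (∇F(x))_j + (β/2)(δx_j)²]
  + (β/2) P (P-1) (ρ/m) · E_j[(δx_j)²]`. -/
theorem shotgun_expected_interference_bound {n m P : ℕ} (hm : 0 < m)
    (A : Matrix (Fin n) (Fin m) ℝ) (hA : ∀ j : Fin m, ∑ i, (A i j) ^ 2 = 1)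
    (β : ℝ) (hβ : 0 < β) (F : (Fin m → ℝ) → ℝ)
    (hconv : ConvexOn ℝ {z : Fin m → ℝ | 0 ≤ z} F)
    (hF : Assumption2 A β F)
    (x : Fin m → ℝ) (hx : 0 ≤ x) (hdiff : DifferentiableAt ℝ F x)
    (ρ : ℝ) (hρ : ρ = specRad (Aᵀ * A))
    (δ : Fin m → ℝ) (hδ : ∀ j, δ j = max (-(x j)) (-(grad F x j) / β))
    (Δ : (Fin P → Fin m) → (Fin m → ℝ))
    (hΔ : ∀ σ : Fin P → Fin m, Δ σ = ∑ j : Fin P, Pi.single (σ j) (δ (σ j)))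
    (hfeas : ∀ σ : Fin P → Fin m, 0 ≤ x + Δ σ) :
    (1 / (m : ℝ) ^ P) * ∑ σ : Fin P → Fin m, (F (x + Δ σ) - F x) ≤
      (P : ℝ) * ((1 / (m : ℝ)) * ∑ j, (δ j * grad F x j + β / 2 * (δ j) ^ 2)) +
        β / 2 * (P : ℝ) * ((P : ℝ) - 1) * (ρ / m) *
          ((1 / (m : ℝ)) * ∑ j, (δ j) ^ 2) :=
  shotgun_expected_interference_bound_general A hA β hβ F hF x hx ρ hρ δ Δ hΔ hfeas
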